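/- Let G be a nontrivial finite group. Then the Jordan constant of the wreath-type group (G × G) ⋊ ℤ/2ℤ, where the nontrivial element of ℤ/2ℤ acts by swapping the two factors, equals 2·J(G)². -/

import Mathlib

/-- The factor-swapping automorphism of G × G. -/
def swapAut (G : Type*) [Group G] : MulAut (G × G) := (MulEquiv.prodComm : (G × G) ≃* (G × G))

theorem swapAut_sq (G : Type*) [Group G] : swapAut G ^ 2 = 1 := by
  ext x <;> simp [swapAut, pow_succ]

/-- The action of ℤ/2ℤ on G × G where the nontrivial element swaps the factors. -/
def swapAction (G : Type*) [Group G] : Multiplicative (ZMod 2) →* MulAut (G × G) :=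
  MonoidHom.mk' (fun z => swapAut G ^ (Multiplicative.toAdd z).val)
    (fun z w => by
      simp only [toAdd_mul, ZMod.val_add]
      rw [← pow_eq_pow_mod _ (swapAut_sq G), pow_add])

/-- The Jordan constant of a (finite) group: the least index of a normal abelian
subgroup. -/
noncomputable def jordanConstant (G : Type*) [Group G] : ℕ :=
  sInf {k | ∃ A : Subgroup G, A.Normal ∧ IsMulCommutative A ∧ A.index = k}

/-!
Taking `A × A` for a normal abelian `A ≤ G` of index `J(G)` gives a normal abelian subgroup of
index `2 J(G)²`. Conversely, a normal abelian `B` inside the base `G × G` has index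
`2 [G × G : B] ≥ 2 J(G × G) ≥ 2 J(G)²`, since the two projections of `B` are normal abelian.
If `B` contains some `t = (x, σ)` outside the base, then `t` commutes with its conjugate by
`(a, 1)`, which forces `a² = 1` for every `a : G`; so `G` is abelian, `J(G) = 1`, and `B` is
proper because the wreath product is not abelian when `G` is nontrivial.
-/

namespace Subgroup

variable {G H : Type*} [Group G] [Group H]

instance isMulCommutative_prod (A : Subgroup G) (B : Subgroup H) [IsMulCommutative A]
    [IsMulCommutative B] : IsMulCommutative (A.prod B) :=
  ⟨⟨fun x y => Subtype.ext <|
    Prod.ext (setLike_mul_comm x.2.1 y.2.1) (setLike_mul_comm x.2.2 y.2.2)⟩⟩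

end Subgroup

namespace SemidirectProduct

variable {N K : Type*} [Group N] [Group K] {φ : K →* MulAut N}

instance [Finite N] [Finite K] : Finite (N ⋊[φ] K) := Finite.of_equiv _ equivProd.symm

theorem index_range_inl : (inl : N →* N ⋊[φ] K).range.index = Nat.card K := by
  rw [range_inl_eq_ker_rightHom, Subgroup.index_ker,
    MonoidHom.range_eq_top_of_surjective _ rightHom_surjective, Subgroup.card_top]

theorem index_map_inl (S : Subgroup N) :
    (S.map (inl : N →* N ⋊[φ] K)).index = S.index * Nat.card K := by
  rw [Subgroup.index_map_of_injective _ inl_injective, index_range_inl]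

theorem mul_inl_mul_inv (w : N ⋊[φ] K) (x : N) :
    w * inl x * w⁻¹ = inl (w.left * φ w.right x * w.left⁻¹) := by
  ext <;> simp [mul_assoc]

theorem normal_map_inl {S : Subgroup N} [S.Normal] (hS : ∀ k, ∀ x ∈ S, φ k x ∈ S) :
    (S.map (inl : N →* N ⋊[φ] K)).Normal where
  conj_mem := by
    rintro _ ⟨x, hx, rfl⟩ w
    rw [mul_inl_mul_inv]
    exact ⟨_, Subgroup.Normal.conj_mem inferInstance _ (hS _ x hx) _, rfl⟩

end SemidirectProduct

section JordanConstant

variable {G H : Type*} [Group G] [Group H]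

variable (G) in
theorem exists_normal_isMulCommutative_index_eq_jordanConstant :
    ∃ A : Subgroup G, A.Normal ∧ IsMulCommutative A ∧ A.index = jordanConstant G :=
  Nat.sInf_mem (s := {k | ∃ A : Subgroup G, A.Normal ∧ IsMulCommutative A ∧ A.index = k})
    ⟨_, Subgroup.center G, inferInstance, inferInstance, rfl⟩

theorem jordanConstant_le_index (A : Subgroup G) [A.Normal] [IsMulCommutative A] :
    jordanConstant G ≤ A.index :=
  Nat.sInf_le ⟨A, inferInstance, inferInstance, rfl⟩

theorem jordanConstant_eq_one_of_commute [Finite G] (h : ∀ a b : G, Commute a b) :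
    jordanConstant G = 1 := by
  have : IsMulCommutative G := ⟨⟨h⟩⟩
  obtain ⟨A, -, -, hA⟩ := exists_normal_isMulCommutative_index_eq_jordanConstant G
  have hpos : 0 < jordanConstant G := hA ▸ Nat.pos_of_ne_zero A.index_ne_zero_of_finite
  have hle : jordanConstant G ≤ 1 := Subgroup.index_top (G := G) ▸ jordanConstant_le_index ⊤
  omega

theorem jordanConstant_mul_le_jordanConstant_prod [Finite G] [Finite H] :
    jordanConstant G * jordanConstant H ≤ jordanConstant (G × H) := by
  obtain ⟨B, hB, hBc, hBi⟩ := exists_normal_isMulCommutative_index_eq_jordanConstant (G × H)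
  have hfst : (B.map (MonoidHom.fst G H)).Normal := hB.map _ Prod.fst_surjective
  have hsnd : (B.map (MonoidHom.snd G H)).Normal := hB.map _ Prod.snd_surjective
  have hle : B ≤ (B.map (MonoidHom.fst G H)).prod (B.map (MonoidHom.snd G H)) :=
    fun x hx => ⟨⟨x, hx, rfl⟩, ⟨x, hx, rfl⟩⟩
  calc jordanConstant G * jordanConstant H
      ≤ (B.map (MonoidHom.fst G H)).index * (B.map (MonoidHom.snd G H)).index :=
        Nat.mul_le_mul (jordanConstant_le_index _) (jordanConstant_le_index _)
    _ = ((B.map (MonoidHom.fst G H)).prod (B.map (MonoidHom.snd G H))).index :=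
        (Subgroup.index_prod _ _).symm
    _ ≤ B.index := Subgroup.index_antitone hle
    _ = jordanConstant (G × H) := hBi

end JordanConstant

namespace SemidirectProduct

variable {N K : Type*} [Group N] [Group K] {φ : K →* MulAut N}

theorem jordanConstant_mul_card_le_index (B : Subgroup (N ⋊[φ] K)) [B.Normal]
    [IsMulCommutative B] (hB : B ≤ (inl : N →* N ⋊[φ] K).range) :
    jordanConstant N * Nat.card K ≤ B.index := by
  have : IsMulCommutative (B.comap inl) := B.comap_injective_isMulCommutative inl_injective
  calc jordanConstant N * Nat.card K ≤ (B.comap inl).index * Nat.card K :=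
        Nat.mul_le_mul_right _ (jordanConstant_le_index _)
    _ = B.index := by rw [← index_map_inl, Subgroup.map_comap_eq_self hB]

end SemidirectProduct

open SemidirectProduct

section Swap

variable {G : Type*} [Group G]

theorem swapAction_of_ne_one {z : Multiplicative (ZMod 2)} (hz : z ≠ 1) :
    swapAction G z = swapAut G := by
  obtain rfl : z = Multiplicative.ofAdd 1 := by
    revert z; decide
  rfl

theorem swapAction_mem_prod_self (A : Subgroup G) (z : Multiplicative (ZMod 2)) {x : G × G}
    (hx : x ∈ A.prod A) : swapAction G z x ∈ A.prod A := by
  by_cases hz : z = 1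
  · simpa [hz] using hx
  · rw [swapAction_of_ne_one hz]
    exact ⟨hx.2, hx.1⟩

end Swap

abbrev SwapWreath (G : Type*) [Group G] : Type _ :=
  (G × G) ⋊[swapAction G] Multiplicative (ZMod 2)

namespace SwapWreath

variable {G : Type*} [Group G]

theorem sq_eq_one_of_not_le_range_inl (B : Subgroup (SwapWreath G)) [B.Normal]
    [IsMulCommutative B] (hB : ¬ B ≤ (inl : G × G →* SwapWreath G).range) (a : G) :
    a ^ 2 = 1 := by
  obtain ⟨t, htB, ht⟩ := SetLike.not_le_iff_exists.mp hB
  have hswap : swapAction G t.right = swapAut G :=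
    swapAction_of_ne_one fun h => ht (by rw [range_inl_eq_ker_rightHom]; exact h)
  have hcomm := setLike_mul_comm htB
    (Subgroup.Normal.conj_mem inferInstance t htB (inl (a, 1) : SwapWreath G))
  -- The second coordinates of the two products are `x₂ a x₁` and `x₂ a⁻¹ x₁`, where `t = (x, σ)`.
  have hsnd := congrArg (fun w : SwapWreath G => w.left.2) hcomm
  rw [sq, mul_eq_one_iff_eq_inv]
  simpa [hswap, swapAut, mul_assoc] using hsnd

theorem ne_top_of_isMulCommutative [Nontrivial G] (B : Subgroup (SwapWreath G))
    [IsMulCommutative B] : B ≠ ⊤ := by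
  rintro rfl
  obtain ⟨g, hg⟩ := exists_ne (1 : G)
  have hcomm := setLike_mul_comm (Subgroup.mem_top (inl (g, 1) : SwapWreath G))
    (Subgroup.mem_top (inr (Multiplicative.ofAdd 1)))
  have hfst := congrArg (fun w : SwapWreath G => w.left.1) hcomm
  exact hg (by simpa [swapAction_of_ne_one, swapAut] using hfst)

end SwapWreath

/-- For a nontrivial finite group G,
J((G × G) ⋊ ℤ/2ℤ) = 2 · J(G)², where ℤ/2ℤ swaps the two factors. -/
theorem jordanConstant_wreath (G : Type*) [Group G] [Finite G] [Nontrivial G] :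
    jordanConstant ((G × G) ⋊[swapAction G] Multiplicative (ZMod 2)) =
      2 * (jordanConstant G) ^ 2 := by
  have hcard : Nat.card (Multiplicative (ZMod 2)) = 2 := Nat.card_zmod 2
  apply le_antisymm
  · obtain ⟨A, hA, hAc, hAi⟩ := exists_normal_isMulCommutative_index_eq_jordanConstant G
    have := normal_map_inl (φ := swapAction G) (swapAction_mem_prod_self A)
    calc _ ≤ ((A.prod A).map (inl : G × G →* SwapWreath G)).index := jordanConstant_le_index _
      _ = 2 * jordanConstant G ^ 2 := by
        rw [index_map_inl, Subgroup.index_prod, hAi, hcard]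
        ring
  · obtain ⟨B, hB, hBc, hBi⟩ :=
      exists_normal_isMulCommutative_index_eq_jordanConstant (SwapWreath G)
    rw [← hBi]
    by_cases hBbase : B ≤ (inl : G × G →* SwapWreath G).range
    · calc 2 * jordanConstant G ^ 2 = jordanConstant G * jordanConstant G * 2 := by ring
        _ ≤ jordanConstant (G × G) * 2 :=
          Nat.mul_le_mul_right _ jordanConstant_mul_le_jordanConstant_prod
        _ = jordanConstant (G × G) * Nat.card (Multiplicative (ZMod 2)) := by rw [hcard]
        _ ≤ B.index := jordanConstant_mul_card_le_index B hBbase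
    · have hG : ∀ a b : G, Commute a b :=
        Commute.of_orderOf_dvd_two fun a => orderOf_dvd_of_pow_eq_one
          (SwapWreath.sq_eq_one_of_not_le_range_inl B hBbase a)
      rw [jordanConstant_eq_one_of_commute hG]
      exact Subgroup.one_lt_index_of_ne_top (SwapWreath.ne_top_of_isMulCommutative B)
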